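/- Let H be a Hopf algebra and A a partial H-module algebra (i.e., 1_H·a = a and h·(a(k·b)) = Σ (h₁·a)(h₂k·b) for all h,k ∈ H, a,b ∈ A). Then for all h ∈ H and x,y ∈ A, Σ h₁·(S(h₂)·(xy)) = Σ (h₁·(S(h₂)·x))·y; that is, the map a ↦ Σ h₁·(S(h₂)·a) is a right A-module endomorphism of A. -/

import Mathlib

/-!
Taking `k = 1` in the partial action axiom gives `g · (x y) = Σ (g₁ · x)(g₂ · y)`, and the
antipode is anti-comultiplicative, `Δ (S h) = Σ S h₂ ⊗ S h₁`. Hence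
`Σ h₁ · (S h₂ · (x y)) = Σ h₁ · ((S h₃ · x)(S h₂ · y))`, which the axiom (after coassociativity)
turns into `Σ (h₁ · (S h₄ · x))(h₂ S h₃ · y)`. Since `Σ h₂ S h₃ = ε(h₂) 1` and `1` acts
trivially, this is `Σ (h₁ · (S h₂ · x)) y`.
-/

open TensorProduct

section PartialHopfPrelude

variable (k : Type) [Field k] (H : Type) [Ring H] [HopfAlgebra k H]

/-- Sweedler-style sum `Σ f h₁ h₂` over the comultiplication of `h`. -/
noncomputable def sweedler {M : Type} [AddCommGroup M] [Module k M]
    (f : H →ₗ[k] H →ₗ[k] M) (h : H) : M :=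
  TensorProduct.lift f (Coalgebra.comul h)

variable {A : Type} [AddCommGroup A] [Module k A]

/-- `Σ (h₁ · a) * (h₂ g · b)`, with an explicit multiplication `mA` on `A`. -/
noncomputable def paRhs (mA : A →ₗ[k] A →ₗ[k] A) (act : H →ₗ[k] A →ₗ[k] A)
    (h g : H) (a b : A) : A :=
  sweedler k H ((mA.comp (act.flip a)).compl₂ ((act.flip b).comp (LinearMap.mulRight k g))) h

/-- `Σ (h₁ g · b) * (h₂ · a)`, with an explicit multiplication `mA` on `A`. -/
noncomputable def paSymmRhs (mA : A →ₗ[k] A →ₗ[k] A) (act : H →ₗ[k] A →ₗ[k] A)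
    (h g : H) (a b : A) : A :=
  sweedler k H ((mA.comp ((act.flip b).comp (LinearMap.mulRight k g))).compl₂ (act.flip a)) h

/-- A (left) partial action of the Hopf algebra `H` on `A`, where the (possibly nonunital,
possibly nonassociative) multiplication of `A` is given explicitly as a bilinear map `mA`:
`1_H · a = a` and `h · (a (g · b)) = Σ (h₁ · a)(h₂ g · b)`. -/
structure IsPartialActionOn (mA : A →ₗ[k] A →ₗ[k] A) (act : H →ₗ[k] A →ₗ[k] A) : Prop where
  one_act : ∀ a : A, act 1 a = a
  act_assoc : ∀ (h g : H) (a b : A), act h (mA a (act g b)) = paRhs k H mA act h g a b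

/-- A symmetrical partial action: additionally `h · ((g · b) a) = Σ (h₁ g · b)(h₂ · a)`. -/
structure IsSymmPartialActionOn (mA : A →ₗ[k] A →ₗ[k] A) (act : H →ₗ[k] A →ₗ[k] A)
    extends IsPartialActionOn k H mA act : Prop where
  act_symm : ∀ (h g : H) (a b : A), act h (mA (act g b) a) = paSymmRhs k H mA act h g a b

variable {B : Type} [NonUnitalRing B] [Module k B] [SMulCommClass k B B] [IsScalarTower k B B]

/-- A partial action of `H` on the nonunital algebra `B` (with its own multiplication). -/
def IsPartialAction (act : H →ₗ[k] B →ₗ[k] B) : Prop :=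
  IsPartialActionOn k H (LinearMap.mul k B) act

/-- A symmetrical partial action of `H` on the nonunital algebra `B`. -/
def IsSymmPartialAction (act : H →ₗ[k] B →ₗ[k] B) : Prop :=
  IsSymmPartialActionOn k H (LinearMap.mul k B) act

end PartialHopfPrelude

namespace HopfAlgebra

open Coalgebra WithConv LinearMap Algebra.TensorProduct
open scoped RingTheory.LinearMap

variable {R C : Type*} [CommSemiring R] [Semiring C] [HopfAlgebra R C]

lemma algHom_comp_antipode_convMul {B : Type*} [Semiring B] [Algebra R B] (φ : C →ₐ[R] B) :
    toConv (φ.toLinearMap ∘ₗ antipode R) * toConv φ.toLinearMap = 1 := by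
  ext c
  rw [(ℛ R c).convMul_apply]
  simp [← map_mul, ← map_sum, sum_antipode_mul_eq_algebraMap_counit]

lemma includeLeft_convMul_includeRight :
    toConv (includeLeft : C →ₐ[R] C ⊗[R] C).toLinearMap * toConv (includeRight).toLinearMap =
      toConv (δ : C →ₗ[R] C ⊗[R] C) := by
  ext c
  rw [(ℛ R c).convMul_apply]
  simp [tmul_mul_tmul, (ℛ R c).eq]

lemma comm_comp_map_antipode_comp_comul :
    toConv ((TensorProduct.comm R C C).toLinearMap ∘ₗ (antipode R ⊗ₘ antipode R) ∘ₗ δ) =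
      toConv ((includeRight : C →ₐ[R] C ⊗[R] C).toLinearMap ∘ₗ antipode R) *
        toConv ((includeLeft : C →ₐ[R] C ⊗[R] C).toLinearMap ∘ₗ antipode R) := by
  ext c
  rw [(ℛ R c).convMul_apply]
  simp [tmul_mul_tmul, ← (ℛ R c).eq]

/-- `τ ∘ (S ⊗ S) ∘ Δ = (ι₂ ∘ S) * (ι₁ ∘ S)` is a left convolution inverse of `Δ = ι₁ * ι₂`,
and `Δ ∘ S` is a right one (`comul_right_inv`). -/
lemma comul_comp_antipode :
    δ ∘ₗ antipode R =
      (TensorProduct.comm R C C).toLinearMap ∘ₗ (antipode R ⊗ₘ antipode R) ∘ₗ δ := by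
  have h : toConv ((TensorProduct.comm R C C).toLinearMap ∘ₗ (antipode R ⊗ₘ antipode R) ∘ₗ δ) *
      toConv (δ : C →ₗ[R] C ⊗[R] C) = 1 := by
    rw [comm_comp_map_antipode_comp_comul, ← includeLeft_convMul_includeRight, mul_assoc,
      ← mul_assoc _ (toConv includeLeft.toLinearMap), algHom_comp_antipode_convMul, one_mul,
      algHom_comp_antipode_convMul]
  exact congrArg ofConv (left_inv_eq_right_inv h comul_right_inv).symm

lemma comul_antipode_eq_sum {c : C} {ι : Type*} (r : Repr R c ι) :
    δ (antipode R c) = ∑ i ∈ r.index, antipode R (r.right i) ⊗ₜ[R] antipode R (r.left i) := by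
  rw [← LinearMap.comp_apply (g := antipode R), comul_comp_antipode]
  simp [← r.eq]

end HopfAlgebra

namespace Coalgebra

variable {R C M N : Type*} [CommSemiring R] [AddCommMonoid C] [Module R C] [Coalgebra R C]
  [AddCommMonoid M] [Module R M] [AddCommMonoid N] [Module R N]

lemma sum_smul_counit {c : C} {ι : Type*} (r : Repr R c ι) :
    ∑ i ∈ r.index, counit (R := R) (r.right i) • r.left i = c := by
  simpa only [map_sum, TensorProduct.lift.tmul, LinearMap.flip_apply, LinearMap.lsmul_apply,
    one_smul] using congr(TensorProduct.lift (LinearMap.lsmul R C).flip $(sum_tmul_counit_eq r))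

lemma sum_apply_apply_eq {c : C} {ι : Type*} {κ Λ : ι → Type*} (r : Repr R c ι)
    (a₁ : (i : ι) → Repr R (r.left i) (κ i)) (a₂ : (i : ι) → Repr R (r.right i) (Λ i))
    (F : C →ₗ[R] N →ₗ[R] M) (g : C →ₗ[R] C →ₗ[R] N) :
    ∑ i ∈ r.index, ∑ j ∈ (a₁ i).index, F ((a₁ i).left j) (g ((a₁ i).right j) (r.right i)) =
      ∑ i ∈ r.index, ∑ j ∈ (a₂ i).index, F (r.left i) (g ((a₂ i).left j) ((a₂ i).right j)) := by
  simpa using congr((TensorProduct.lift F ∘ₗ LinearMap.lTensor C (TensorProduct.lift g))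
    $(sum_tmul_tmul_eq r a₁ a₂))

end Coalgebra

section PartialAction

open Coalgebra HopfAlgebra

variable {k H : Type} [Field k] [Ring H] [HopfAlgebra k H]

lemma sweedler_eq_sum {M : Type} [AddCommGroup M] [Module k M] (f : H →ₗ[k] H →ₗ[k] M) {h : H}
    {ι : Type*} (r : Repr k h ι) : sweedler k H f h = ∑ i ∈ r.index, f (r.left i) (r.right i) := by
  simp [sweedler, ← r.eq]

lemma sweedler_antipode_eq_sum {M : Type} [AddCommGroup M] [Module k M] (f : H →ₗ[k] H →ₗ[k] M)
    {h : H} {ι : Type*} (r : Repr k h ι) :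
    sweedler k H f (antipode k h) =
      ∑ i ∈ r.index, f (antipode k (r.right i)) (antipode k (r.left i)) := by
  simp [sweedler, comul_antipode_eq_sum r]

variable {A : Type} [AddCommGroup A] [Module k A] {mA : A →ₗ[k] A →ₗ[k] A}
  {act : H →ₗ[k] A →ₗ[k] A}

lemma paRhs_eq_sum (h g : H) (a b : A) {ι : Type*} (r : Repr k h ι) :
    paRhs k H mA act h g a b = ∑ i ∈ r.index, mA (act (r.left i) a) (act (r.right i * g) b) := by
  simp [paRhs, sweedler_eq_sum _ r]

namespace IsPartialActionOn

lemma act_apply_eq_sweedler (hact : IsPartialActionOn k H mA act) (g : H) (x y : A) :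
    act g (mA x y) = sweedler k H ((mA ∘ₗ act.flip x).compl₂ (act.flip y)) g := by
  conv_lhs => rw [← hact.one_act y, hact.act_assoc]
  simp [paRhs]

lemma act_antipode_apply_eq_sum (hact : IsPartialActionOn k H mA act) (g : H) (x y : A)
    {ι : Type*} (r : Repr k g ι) :
    act (antipode k g) (mA x y) =
      ∑ i ∈ r.index, mA (act (antipode k (r.right i)) x) (act (antipode k (r.left i)) y) := by
  simp [hact.act_apply_eq_sweedler, sweedler_antipode_eq_sum _ r]

lemma sum_paRhs_antipode (hact : IsPartialActionOn k H mA act) (w : H) (a y : A)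
    {ι : Type*} (r : Repr k w ι) :
    ∑ i ∈ r.index, paRhs k H mA act (r.left i) (antipode k (r.right i)) a y = mA (act w a) y := by
  let rL := fun i ↦ ℛ k (r.left i)
  let rR := fun i ↦ ℛ k (r.right i)
  have coassoc := sum_apply_apply_eq r rL rR (mA ∘ₗ act.flip a)
    (((LinearMap.mul k H).compl₂ (antipode k)).compr₂ (act.flip y))
  simp only [LinearMap.comp_apply, LinearMap.flip_apply, LinearMap.compr₂_apply,
    LinearMap.compl₂_apply, LinearMap.mul_apply'] at coassoc
  calc ∑ i ∈ r.index, paRhs k H mA act (r.left i) (antipode k (r.right i)) a y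
      = ∑ i ∈ r.index, ∑ j ∈ (rR i).index,
          mA (act (r.left i) a) (act ((rR i).left j * antipode k ((rR i).right j)) y) := by
        simp only [paRhs_eq_sum _ _ _ _ (rL _), coassoc]
    _ = ∑ i ∈ r.index, counit (R := k) (r.right i) • mA (act (r.left i) a) y := by
        simp only [← map_sum, ← LinearMap.sum_apply, sum_mul_antipode_eq_algebraMap_counit,
          Algebra.algebraMap_eq_smul_one, map_smul, LinearMap.smul_apply, hact.one_act]
    _ = mA (act w a) y := by
        conv_rhs => rw [← sum_smul_counit r]
        simp only [map_sum, map_smul, LinearMap.sum_apply, LinearMap.smul_apply]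

theorem sweedler_act_antipode_apply (hact : IsPartialActionOn k H mA act) (h : H) (x y : A) :
    sweedler k H (act.compl₂ (act.flip (mA x y) ∘ₗ antipode k)) h =
      mA (sweedler k H (act.compl₂ (act.flip x ∘ₗ antipode k)) h) y := by
  let r := ℛ k h
  let rL := fun i ↦ ℛ k (r.left i)
  let rR := fun i ↦ ℛ k (r.right i)
  have coassoc := sum_apply_apply_eq r rL rR act
    ((mA ∘ₗ act.flip x ∘ₗ antipode k).compl₂ (act.flip y ∘ₗ antipode k)).flip
  simp only [LinearMap.comp_apply, LinearMap.flip_apply, LinearMap.compl₂_apply] at coassoc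
  calc sweedler k H (act.compl₂ (act.flip (mA x y) ∘ₗ antipode k)) h
      = ∑ i ∈ r.index, ∑ j ∈ (rR i).index, act (r.left i)
          (mA (act (antipode k ((rR i).right j)) x) (act (antipode k ((rR i).left j)) y)) := by
        simp [sweedler_eq_sum _ r, hact.act_antipode_apply_eq_sum _ _ _ (rR _)]
    _ = ∑ i ∈ r.index, ∑ j ∈ (rL i).index, paRhs k H mA act ((rL i).left j)
          (antipode k ((rL i).right j)) (act (antipode k (r.right i)) x) y := by
        simp only [← coassoc, ← hact.act_assoc]
    _ = mA (sweedler k H (act.compl₂ (act.flip x ∘ₗ antipode k)) h) y := by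
        simp [hact.sum_paRhs_antipode, sweedler_eq_sum _ r]

end IsPartialActionOn

end PartialAction

section Stmt1

variable {k : Type} [Field k] {H : Type} [Ring H] [HopfAlgebra k H]
variable {A : Type} [NonUnitalRing A] [Module k A] [SMulCommClass k A A] [IsScalarTower k A A]

/-- `Σ h₁ · (S(h₂) · x)`. -/
noncomputable def hSh (act : H →ₗ[k] A →ₗ[k] A) (h : H) (x : A) : A :=
  sweedler k H (act.compl₂ ((act.flip x).comp (HopfAlgebra.antipode (R := k)))) h

/-- If `A` is a partial `H`-module algebra, then for all `h ∈ H`, `x, y ∈ A`,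
`Σ h₁ · (S(h₂) · (x y)) = (Σ h₁ · (S(h₂) · x)) y`; that is, `a ↦ Σ h₁ · (S(h₂) · a)` is a
right `A`-module endomorphism of `A`. -/
theorem hSh_right_module_map (act : H →ₗ[k] A →ₗ[k] A)
    (hpa : IsPartialAction k H act) (h : H) (x y : A) :
    hSh act h (x * y) = hSh act h x * y := by
  exact IsPartialActionOn.sweedler_act_antipode_apply hpa h x y

end Stmt1
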